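/- arXiv:1204.0665 — 2 statements merged into one kernel-verified Lean document; each statement's English description precedes it below -/
import Mathlib

section
/- Let X be a diagonal n×n matrix with diagonal entries λ_1 > λ_2 ≥ ... ≥ λ_n (we only need λ_1 ≥ λ_i), let v ∈ R^n have all coordinates nonzero, and let ε > 0. The largest eigenvalue of X + (ε/n) v v^T equals λ_1 + t*, where t* > 0 is the unique positive root of the secular equation s(t) = n/ε − v_1²/t − Σ_{i=2}^n v_i²/((λ_1 − λ_i) + t) = 0, and t* ≥ ε v_1²/n. -/
open MeasureTheory ProbabilityTheory Matrix
open scoped Classical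

noncomputable def stdGaussian (n : ℕ) : Measure (Fin n → ℝ) :=
  Measure.pi fun _ => gaussianReal 0 1

instance (n : ℕ) : IsProbabilityMeasure (stdGaussian n) :=
  inferInstanceAs (IsProbabilityMeasure (Measure.pi fun _ : Fin n => gaussianReal 0 1))

theorem symPart_isHermitian {n : ℕ} (X : Matrix (Fin n) (Fin n) ℝ) :
    ((2⁻¹ : ℝ) • (X + Xᵀ)).IsHermitian := by
  unfold Matrix.IsHermitian
  ext i j
  simp [Matrix.conjTranspose_apply, Matrix.transpose_apply, Matrix.add_apply]
  ring

/-- The eigenvalues (with multiplicity) of a real symmetric matrix, read off the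
symmetric part `(X + Xᵀ)/2` so as to be defined for every matrix. -/
noncomputable def eigs {n : ℕ} (X : Matrix (Fin n) (Fin n) ℝ) : Fin n → ℝ :=
  (symPart_isHermitian X).eigenvalues

/-- Largest eigenvalue `λ_max`. -/
noncomputable def lamMax {n : ℕ} (X : Matrix (Fin n) (Fin n) ℝ) : ℝ :=
  ⨆ i, eigs X i

/-- Second largest eigenvalue (with multiplicity) `λ₂`. -/
noncomputable def lam2 {n : ℕ} (X : Matrix (Fin n) (Fin n) ℝ) : ℝ :=
  ⨅ i, ⨆ j : {j : Fin n // j ≠ i}, eigs X j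

/-- Multiplicity of the largest eigenvalue. -/
noncomputable def lamMaxMult {n : ℕ} (X : Matrix (Fin n) (Fin n) ℝ) : ℕ :=
  (Finset.univ.filter fun i => eigs X i = lamMax X).card

/-! For `μ` distinct from all `d i`, an eigenvector `u` of `M = diagonal d + a • vecMulVec v v` with
eigenvalue `μ` must be proportional to `(v i / (μ - d i))ᵢ` and have `v ⬝ᵥ u ≠ 0`, which forces
the secular equation `a * ∑ v i ^ 2 / (μ - d i) = 1`; conversely every root yields such an
eigenvector. On `(d i₀, ∞)` the secular sum decreases strictly from `+∞` to `0`, so it has exactly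
one root `μ` there, and every eigenvalue above `d i₀` equals `μ`; hence `λ_max M = μ`. Writing
`μ = d i₀ + t` gives the secular equation of the statement, and its `i₀` term alone gives
`t ≥ ε v i₀ ² / n`. -/

open Set

section SecularFunction

variable {ι : Type*} [Fintype ι] {d v : ι → ℝ} {i₀ : ι}

noncomputable def secularFun (d v : ι → ℝ) (μ : ℝ) : ℝ :=
  ∑ i, v i ^ 2 / (μ - d i)

theorem secularFun_eq_add_sum_erase [DecidableEq ι] (d v : ι → ℝ) (i₀ : ι) (t : ℝ) :
    secularFun d v (d i₀ + t) =
      v i₀ ^ 2 / t + ∑ i ∈ Finset.univ.erase i₀, v i ^ 2 / ((d i₀ - d i) + t) := by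
  rw [secularFun, ← Finset.add_sum_erase _ _ (Finset.mem_univ i₀), add_sub_cancel_left]
  congr 1
  refine Finset.sum_congr rfl fun i _ => ?_
  ring_nf

theorem div_le_secularFun (hd : ∀ i, d i ≤ d i₀) {μ : ℝ} (hμ : d i₀ < μ) :
    v i₀ ^ 2 / (μ - d i₀) ≤ secularFun d v μ :=
  Finset.single_le_sum (f := fun i => v i ^ 2 / (μ - d i))
    (fun i _ => div_nonneg (sq_nonneg _) (by linarith [hd i])) (Finset.mem_univ i₀)

theorem secularFun_le (hd : ∀ i, d i ≤ d i₀) {μ : ℝ} (hμ : d i₀ < μ) :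
    secularFun d v μ ≤ (∑ i, v i ^ 2) / (μ - d i₀) := by
  rw [secularFun, Finset.sum_div]
  exact Finset.sum_le_sum fun i _ =>
    div_le_div_of_nonneg_left (sq_nonneg _) (sub_pos.2 hμ) (by linarith [hd i])

theorem continuousOn_secularFun (hd : ∀ i, d i ≤ d i₀) :
    ContinuousOn (secularFun d v) (Ioi (d i₀)) :=
  continuousOn_finsetSum _ fun i _ =>
    continuousOn_const.div (continuousOn_id.sub continuousOn_const) fun _ hμ =>
      (sub_pos.2 ((hd i).trans_lt hμ)).ne'

theorem secularFun_strictAntiOn (hd : ∀ i, d i ≤ d i₀) (hv : v i₀ ≠ 0) :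
    StrictAntiOn (secularFun d v) (Ioi (d i₀)) := by
  intro μ hμ ν hν hμν
  rw [mem_Ioi] at hμ hν
  refine Finset.sum_lt_sum (fun i _ => ?_) ⟨i₀, Finset.mem_univ _, ?_⟩
  · exact div_le_div_of_nonneg_left (sq_nonneg _) (by linarith [hd i]) (by linarith)
  · exact div_lt_div_of_pos_left (by positivity) (sub_pos.2 hμ) (by linarith)

theorem exists_secularFun_eq (hd : ∀ i, d i ≤ d i₀) (hv : v i₀ ≠ 0) {r : ℝ} (hr : 0 < r) :
    ∃ μ, d i₀ + v i₀ ^ 2 / r ≤ μ ∧ secularFun d v μ = r := by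
  have hv₀ : 0 < v i₀ ^ 2 := by positivity
  have hv_le : v i₀ ^ 2 ≤ ∑ i, v i ^ 2 :=
    Finset.single_le_sum (fun i _ => sq_nonneg (v i)) (Finset.mem_univ i₀)
  set μ₁ := d i₀ + v i₀ ^ 2 / r
  set μ₂ := d i₀ + (∑ i, v i ^ 2) / r
  have hμ₁ : d i₀ < μ₁ := lt_add_of_pos_right _ (by positivity)
  have hμ₁₂ : μ₁ ≤ μ₂ := add_le_add_right (div_le_div_of_nonneg_right hv_le hr.le) _
  have h₁ : r ≤ secularFun d v μ₁ := by
    simpa [μ₁, hv₀.ne'] using div_le_secularFun (v := v) hd hμ₁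
  have h₂ : secularFun d v μ₂ ≤ r := by
    simpa [μ₂, (hv₀.trans_le hv_le).ne'] using secularFun_le (v := v) hd (hμ₁.trans_le hμ₁₂)
  obtain ⟨μ, hμ, hμr⟩ := intermediate_value_Icc' hμ₁₂
    ((continuousOn_secularFun hd).mono fun _ h => hμ₁.trans_le h.1) ⟨h₂, h₁⟩
  exact ⟨μ, hμ.1, hμr⟩

end SecularFunction

namespace Matrix

section Eigs

variable {n : ℕ} {X : Matrix (Fin n) (Fin n) ℝ}

theorem IsSymm.symPart_eq_self (hX : X.IsSymm) : (2⁻¹ : ℝ) • (X + Xᵀ) = X := by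
  rw [hX.eq, ← two_smul ℝ X, smul_smul, inv_mul_cancel₀ two_ne_zero, one_smul]

theorem IsSymm.mem_range_eigs_iff (hX : X.IsSymm) {μ : ℝ} :
    μ ∈ Set.range (eigs X) ↔ ∃ w, w ≠ 0 ∧ X *ᵥ w = μ • w := by
  rw [eigs, ← (symPart_isHermitian X).spectrum_real_eq_range_eigenvalues, hX.symPart_eq_self,
    ← spectrum_toLin', ← Module.End.hasEigenvalue_iff_mem_spectrum, Module.End.hasEigenvalue_iff,
    Submodule.ne_bot_iff]
  simp only [Module.End.mem_eigenspace_iff, toLin'_apply]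
  tauto

theorem IsSymm.lamMax_eq (hX : X.IsSymm) {μ : ℝ}
    (h : IsGreatest {μ | ∃ w, w ≠ 0 ∧ X *ᵥ w = μ • w} μ) : lamMax X = μ := by
  have hrange : Set.range (eigs X) = {μ | ∃ w, w ≠ 0 ∧ X *ᵥ w = μ • w} :=
    Set.ext fun _ => hX.mem_range_eigs_iff
  rw [lamMax, iSup, hrange, h.csSup_eq]

end Eigs

theorem isSymm_diagonal_add_smul_vecMulVec {ι α : Type*} [DecidableEq ι] [CommSemiring α]
    (d v : ι → α) (a : α) :
    (diagonal d + a • vecMulVec v v).IsSymm :=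
  (isSymm_diagonal d).add (IsSymm.smul (transpose_vecMulVec v v) a)

variable {ι : Type*} [Fintype ι] [DecidableEq ι]

theorem diagonal_add_smul_vecMulVec_mulVec_apply {α : Type*} [CommSemiring α] (d v w : ι → α)
    (a : α) (i : ι) :
    ((diagonal d + a • vecMulVec v v) *ᵥ w) i = d i * w i + a * (v ⬝ᵥ w) * v i := by
  simp only [add_mulVec, smul_mulVec, mulVec_diagonal, vecMulVec_mulVec, Pi.add_apply,
    Pi.smul_apply, smul_eq_mul, MulOpposite.smul_eq_mul_unop, MulOpposite.unop_op]
  ring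

variable {d v : ι → ℝ} {a μ : ℝ}

theorem diagonal_add_smul_vecMulVec_mulVec_secular (hμ : ∀ i, d i ≠ μ)
    (h : a * secularFun d v μ = 1) :
    (diagonal d + a • vecMulVec v v) *ᵥ (fun i => v i / (μ - d i)) =
      μ • fun i => v i / (μ - d i) := by
  have hdot : v ⬝ᵥ (fun i => v i / (μ - d i)) = secularFun d v μ :=
    Finset.sum_congr rfl fun i _ => by ring
  funext i
  have hi : μ - d i ≠ 0 := sub_ne_zero.2 (hμ i).symm
  rw [diagonal_add_smul_vecMulVec_mulVec_apply, hdot, h, Pi.smul_apply, smul_eq_mul]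
  field_simp
  ring

theorem mul_secularFun_eq_one_of_mulVec_eq_smul {u : ι → ℝ} (hu : u ≠ 0) (hμ : ∀ i, d i ≠ μ)
    (h : (diagonal d + a • vecMulVec v v) *ᵥ u = μ • u) : a * secularFun d v μ = 1 := by
  set α := v ⬝ᵥ u
  have hu_eq : ∀ i, u i = a * α * (v i / (μ - d i)) := fun i => by
    have hi := congrFun h i
    rw [diagonal_add_smul_vecMulVec_mulVec_apply, Pi.smul_apply, smul_eq_mul] at hi
    rw [mul_div_assoc', eq_div_iff (sub_ne_zero.2 (hμ i).symm)]
    linarith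
  have hα : α ≠ 0 := fun hα => hu (funext fun i => by simp [hu_eq i, hα])
  refine mul_left_cancel₀ hα ?_
  calc α * (a * secularFun d v μ) = ∑ i, v i * (a * α * (v i / (μ - d i))) := by
        rw [secularFun, Finset.mul_sum, Finset.mul_sum]
        exact Finset.sum_congr rfl fun i _ => by ring
    _ = α * 1 := by rw [mul_one]; exact Finset.sum_congr rfl fun i _ => by rw [hu_eq i]

theorem isGreatest_eigenvalues_diagonal_add_smul_vecMulVec {i₀ : ι} (hd : ∀ i, d i ≤ d i₀)
    (hv : v i₀ ≠ 0) (hμ : d i₀ < μ) (h : a * secularFun d v μ = 1) :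
    IsGreatest {ν | ∃ w, w ≠ 0 ∧ (diagonal d + a • vecMulVec v v) *ᵥ w = ν • w} μ := by
  have hdμ : ∀ {ν}, d i₀ < ν → ∀ i, d i ≠ ν := fun hν i => ((hd i).trans_lt hν).ne
  refine ⟨⟨_, fun hw => ?_, diagonal_add_smul_vecMulVec_mulVec_secular (hdμ hμ) h⟩, ?_⟩
  · exact div_ne_zero hv (sub_pos.2 hμ).ne' (congrFun hw i₀)
  rintro ν ⟨u, hu, hν⟩
  by_contra! hμν
  have hν' := mul_secularFun_eq_one_of_mulVec_eq_smul hu (hdμ (hμ.trans hμν)) hν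
  have ha : a ≠ 0 := left_ne_zero_of_mul_eq_one h
  exact hμν.ne ((secularFun_strictAntiOn hd hv).injOn hμ (hμ.trans hμν)
    (mul_left_cancel₀ ha (h.trans hν'.symm)))

end Matrix

theorem stmt5 {n : ℕ} (hn : 0 < n) (d : Fin n → ℝ) (hd : ∀ i, d i ≤ d ⟨0, hn⟩)
    (v : Fin n → ℝ) (hv : ∀ i, v i ≠ 0) (ε : ℝ) (hε : 0 < ε) :
    ∃ t : ℝ, 0 < t ∧
      (n / ε - v ⟨0, hn⟩ ^ 2 / t -
        ∑ i ∈ Finset.univ.erase ⟨0, hn⟩, v i ^ 2 / ((d ⟨0, hn⟩ - d i) + t)) = 0 ∧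
      (∀ t' : ℝ, 0 < t' →
        (n / ε - v ⟨0, hn⟩ ^ 2 / t' -
          ∑ i ∈ Finset.univ.erase ⟨0, hn⟩, v i ^ 2 / ((d ⟨0, hn⟩ - d i) + t')) = 0 →
        t' = t) ∧
      lamMax (Matrix.diagonal d + (ε / n) • Matrix.vecMulVec v v) = d ⟨0, hn⟩ + t ∧
      ε * v ⟨0, hn⟩ ^ 2 / n ≤ t := by
  set i₀ : Fin n := ⟨0, hn⟩
  have hn' : (0 : ℝ) < n := Nat.cast_pos.2 hn
  obtain ⟨μ, hμ_ge, hμ⟩ := exists_secularFun_eq hd (hv i₀) (div_pos hn' hε)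
  have hμ_gt : d i₀ < μ := (lt_add_of_pos_right _ (by have := hv i₀; positivity)).trans_le hμ_ge
  have hsec : ∀ t, n / ε - v i₀ ^ 2 / t -
      ∑ i ∈ Finset.univ.erase i₀, v i ^ 2 / ((d i₀ - d i) + t) =
        n / ε - secularFun d v (d i₀ + t) := fun t => by
    rw [secularFun_eq_add_sum_erase, sub_sub]
  refine ⟨μ - d i₀, sub_pos.2 hμ_gt, ?_, fun t ht h => ?_, ?_, ?_⟩
  · rw [hsec, add_sub_cancel, hμ, sub_self]
  · rw [hsec, sub_eq_zero, ← hμ] at h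
    have := (secularFun_strictAntiOn hd (hv i₀)).injOn (lt_add_of_pos_right _ ht) hμ_gt h.symm
    linarith
  · rw [add_sub_cancel, (Matrix.isSymm_diagonal_add_smul_vecMulVec d v _).lamMax_eq]
    refine Matrix.isGreatest_eigenvalues_diagonal_add_smul_vecMulVec hd (hv i₀) hμ_gt ?_
    rw [hμ]
    field_simp
  · rw [div_div_eq_mul_div] at hμ_ge
    rwa [le_sub_iff_add_le', mul_comm]
end

section
/- Let X ∈ S_n, z_i ∼ N(0, I_n) i.i.d. for i = 1,...,k, let i_0 = argmax_i λ_max(X + (ε/n) z_i z_i^T) and let φ_{i_0} be a corresponding leading unit eigenvector. Then the matrix E[φ_{i_0} φ_{i_0}^T] is diagonalizable in the same orthonormal basis as X; in particular, if X is diagonal then E[φ_{i_0} φ_{i_0}^T] is diagonal. -/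
/-!
Write `c = ε / n`, `F x = λ_max (X + c x xᵀ)` and `X = Oᵀ D O`. For a coordinate reflection `R`,
the orthogonal matrix `S = Oᵀ R O` commutes with `X`, preserves the Gaussian law of `z` and
satisfies `F (S x) = F x`. Almost surely every `F (z i)` exceeds `λ_max X` (this fails only on a
hyperplane) and the values `F (z i)` are distinct (a level set `{F = t}` with `t > λ_max X` lies on
the ellipsoid `c xᵀ (t - X)⁻¹ x = 1`). For `t > λ_max X`, `(X + c x xᵀ) v = t v` forces
`v ∥ (t - X)⁻¹ x`, so the unit leading eigenvector is unique up to sign. Hence `φ (S z) = ± S φ z`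
almost surely, so `S E[φ φᵀ] Sᵀ = E[φ φᵀ]`: the matrix `O E[φ φᵀ] Oᵀ` commutes with every
coordinate reflection and is therefore diagonal.
-/

open MeasureTheory ProbabilityTheory Matrix
open scoped Classical

section OrthogonalGroup

variable {ι R : Type*} [Fintype ι] [DecidableEq ι] [CommRing R] {S : Matrix ι ι R}

lemma transpose_mem_orthogonalGroup (hS : S ∈ orthogonalGroup ι R) :
    Sᵀ ∈ orthogonalGroup ι R := by
  rw [mem_orthogonalGroup_iff', transpose_transpose]
  exact (mem_orthogonalGroup_iff _ _).mp hS

lemma mul_transpose_mul_cancel (hS : S ∈ orthogonalGroup ι R) (A : Matrix ι ι R) :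
    S * (Sᵀ * A) = A := by
  rw [← Matrix.mul_assoc, (mem_orthogonalGroup_iff _ _).mp hS, Matrix.one_mul]

lemma transpose_mul_mul_cancel (hS : S ∈ orthogonalGroup ι R) (A : Matrix ι ι R) :
    Sᵀ * (S * A) = A := by
  rw [← Matrix.mul_assoc, (mem_orthogonalGroup_iff' _ _).mp hS, Matrix.one_mul]

lemma mulVec_transpose_mulVec_cancel (hS : S ∈ orthogonalGroup ι R) (v : ι → R) :
    S *ᵥ (Sᵀ *ᵥ v) = v := by
  rw [mulVec_mulVec, (mem_orthogonalGroup_iff _ _).mp hS, one_mulVec]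

lemma mulVec_dotProduct_mulVec (hS : S ∈ orthogonalGroup ι R) (x y : ι → R) :
    (S *ᵥ x) ⬝ᵥ (S *ᵥ y) = x ⬝ᵥ y := by
  rw [← vecMul_transpose, ← dotProduct_mulVec, mulVec_mulVec,
    (mem_orthogonalGroup_iff' _ _).mp hS, one_mulVec]

end OrthogonalGroup

section LeadingEigenvalue

variable {n : ℕ}

lemma symPart_eq_self {A : Matrix (Fin n) (Fin n) ℝ} (hA : A.IsHermitian) :
    (2⁻¹ : ℝ) • (A + Aᵀ) = A := by
  rw [show Aᵀ = A from hA]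
  module

lemma eigs_eq_eigenvalues {A : Matrix (Fin n) (Fin n) ℝ} (hA : A.IsHermitian) :
    eigs A = hA.eigenvalues := by
  have key : ∀ {B} (_ : B = A) (hB : B.IsHermitian), hB.eigenvalues = hA.eigenvalues := by
    rintro _ rfl _; rfl
  exact key (symPart_eq_self hA) _

lemma lamMax_eq_iSup_eigenvalues {A : Matrix (Fin n) (Fin n) ℝ} (hA : A.IsHermitian) :
    lamMax A = ⨆ i, hA.eigenvalues i := by
  rw [lamMax, eigs_eq_eigenvalues hA]

lemma eigenvalues_le_lamMax {A : Matrix (Fin n) (Fin n) ℝ} (hA : A.IsHermitian) (i : Fin n) :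
    hA.eigenvalues i ≤ lamMax A :=
  lamMax_eq_iSup_eigenvalues hA ▸ le_ciSup (Set.finite_range _).bddAbove i

lemma exists_eigenvalues_eq_lamMax (hn : 0 < n) {A : Matrix (Fin n) (Fin n) ℝ}
    (hA : A.IsHermitian) : ∃ i, hA.eigenvalues i = lamMax A := by
  have : Nonempty (Fin n) := ⟨⟨0, hn⟩⟩
  obtain ⟨i, hi⟩ := Finite.exists_max hA.eigenvalues
  exact ⟨i, le_antisymm (eigenvalues_le_lamMax hA i) (lamMax_eq_iSup_eigenvalues hA ▸ ciSup_le hi)⟩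

lemma dotProduct_mul_mul_transpose_mulVec (U B : Matrix (Fin n) (Fin n) ℝ) (v : Fin n → ℝ) :
    v ⬝ᵥ (U * B * Uᵀ) *ᵥ v = (Uᵀ *ᵥ v) ⬝ᵥ B *ᵥ (Uᵀ *ᵥ v) := by
  rw [← mulVec_mulVec, ← mulVec_mulVec, dotProduct_mulVec, mulVec_transpose]

lemma Matrix.IsHermitian.eq_mul_diagonal_mul_transpose {A : Matrix (Fin n) (Fin n) ℝ}
    (hA : A.IsHermitian) :
    A = (hA.eigenvectorUnitary : Matrix (Fin n) (Fin n) ℝ) * diagonal hA.eigenvalues *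
      (hA.eigenvectorUnitary : Matrix (Fin n) (Fin n) ℝ)ᵀ := by
  conv_lhs => rw [hA.spectral_theorem, Unitary.conjStarAlgAut_apply]
  simp [star_eq_conjTranspose]

lemma Matrix.IsHermitian.dotProduct_mulVec_le {A : Matrix (Fin n) (Fin n) ℝ} (hA : A.IsHermitian)
    (v : Fin n → ℝ) : v ⬝ᵥ A *ᵥ v ≤ lamMax A * (v ⬝ᵥ v) := by
  set U := (hA.eigenvectorUnitary : Matrix (Fin n) (Fin n) ℝ)
  have hUt : Uᵀ ∈ orthogonalGroup (Fin n) ℝ :=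
    transpose_mem_orthogonalGroup hA.eigenvectorUnitary.2
  set y := Uᵀ *ᵥ v
  calc v ⬝ᵥ A *ᵥ v = y ⬝ᵥ diagonal hA.eigenvalues *ᵥ y := by
        conv_lhs => rw [hA.eq_mul_diagonal_mul_transpose]
        exact dotProduct_mul_mul_transpose_mulVec _ _ v
    _ = ∑ i, hA.eigenvalues i * (y i * y i) := by
        simp only [mulVec_diagonal, dotProduct]
        exact Finset.sum_congr rfl fun i _ => by ring
    _ ≤ ∑ i, lamMax A * (y i * y i) := by
        gcongr with i
        · exact mul_self_nonneg _
        · exact eigenvalues_le_lamMax hA i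
    _ = lamMax A * (v ⬝ᵥ v) := by
        rw [← Finset.mul_sum, ← mulVec_dotProduct_mulVec hUt v v]
        rfl

lemma Matrix.IsHermitian.exists_mulVec_eq_lamMax_smul (hn : 0 < n)
    {A : Matrix (Fin n) (Fin n) ℝ} (hA : A.IsHermitian) :
    ∃ v : Fin n → ℝ, v ⬝ᵥ v = 1 ∧ A *ᵥ v = lamMax A • v := by
  obtain ⟨i, hi⟩ := exists_eigenvalues_eq_lamMax hn hA
  refine ⟨hA.eigenvectorBasis i, ?_, hi ▸ hA.mulVec_eigenvectorBasis i⟩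
  have h : inner ℝ (hA.eigenvectorBasis i) (hA.eigenvectorBasis i) = 1 := by
    rw [real_inner_self_eq_norm_sq, hA.eigenvectorBasis.orthonormal.1 i, one_pow]
  rwa [EuclideanSpace.inner_eq_star_dotProduct, star_trivial] at h

lemma dotProduct_symPart_mulVec (M : Matrix (Fin n) (Fin n) ℝ) (v : Fin n → ℝ) :
    v ⬝ᵥ ((2⁻¹ : ℝ) • (M + Mᵀ)) *ᵥ v = v ⬝ᵥ M *ᵥ v := by
  have : v ⬝ᵥ Mᵀ *ᵥ v = v ⬝ᵥ M *ᵥ v := by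
    rw [mulVec_transpose, dotProduct_comm, dotProduct_mulVec]
  rw [smul_mulVec, add_mulVec, dotProduct_smul, dotProduct_add, this, smul_eq_mul]
  ring

lemma lamMax_symPart (M : Matrix (Fin n) (Fin n) ℝ) :
    lamMax ((2⁻¹ : ℝ) • (M + Mᵀ)) = lamMax M := by
  rw [lamMax_eq_iSup_eigenvalues (symPart_isHermitian M)]
  rfl

lemma dotProduct_mulVec_le_lamMax (M : Matrix (Fin n) (Fin n) ℝ) (v : Fin n → ℝ) :
    v ⬝ᵥ M *ᵥ v ≤ lamMax M * (v ⬝ᵥ v) := by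
  rw [← dotProduct_symPart_mulVec, ← lamMax_symPart]
  exact (symPart_isHermitian M).dotProduct_mulVec_le v

lemma exists_dotProduct_mulVec_eq_lamMax (hn : 0 < n) (M : Matrix (Fin n) (Fin n) ℝ) :
    ∃ v : Fin n → ℝ, v ⬝ᵥ v = 1 ∧ v ⬝ᵥ M *ᵥ v = lamMax M := by
  obtain ⟨v, hv1, hv⟩ := (symPart_isHermitian M).exists_mulVec_eq_lamMax_smul hn
  refine ⟨v, hv1, ?_⟩
  rw [← dotProduct_symPart_mulVec, hv, lamMax_symPart, dotProduct_smul, hv1, smul_eq_mul, mul_one]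

lemma lamMax_mul_mul_transpose {S : Matrix (Fin n) (Fin n) ℝ}
    (hS : S ∈ orthogonalGroup (Fin n) ℝ) (M : Matrix (Fin n) (Fin n) ℝ) :
    lamMax (S * M * Sᵀ) = lamMax M := by
  have hsym : (2⁻¹ : ℝ) • (S * M * Sᵀ + (S * M * Sᵀ)ᵀ) = S * ((2⁻¹ : ℝ) • (M + Mᵀ)) * Sᵀ := by
    simp only [transpose_mul, transpose_transpose, Matrix.mul_add, Matrix.add_mul,
      Matrix.mul_smul, Matrix.smul_mul, Matrix.mul_assoc]
  have hpoly : (S * ((2⁻¹ : ℝ) • (M + Mᵀ)) * Sᵀ).charpoly = ((2⁻¹ : ℝ) • (M + Mᵀ)).charpoly := by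
    rw [charpoly_mul_comm, ← Matrix.mul_assoc, (mem_orthogonalGroup_iff' _ _).mp hS, Matrix.one_mul]
  have heigs : eigs (S * M * Sᵀ) = eigs M :=
    ((symPart_isHermitian _).eigenvalues_eq_eigenvalues_iff (symPart_isHermitian M)).mpr
      (by rw [hsym, hpoly])
  rw [lamMax, lamMax, heigs]

lemma dotProduct_mulVec_le_sum_abs {v : Fin n → ℝ} (hv : v ⬝ᵥ v = 1)
    (C : Matrix (Fin n) (Fin n) ℝ) : v ⬝ᵥ C *ᵥ v ≤ ∑ i, ∑ j, |C i j| := by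
  have hle : ∀ i, |v i| ≤ 1 := fun i => by
    rw [abs_le_one_iff_mul_self_le_one, ← hv]
    exact Finset.single_le_sum (fun j _ => mul_self_nonneg (v j)) (Finset.mem_univ i)
  simp only [dotProduct, mulVec, Finset.mul_sum]
  gcongr with i _ j _
  calc v i * (C i j * v j) ≤ |v i| * (|C i j| * |v j|) := by
        rw [← abs_mul, ← abs_mul]; exact le_abs_self _
    _ ≤ 1 * (|C i j| * 1) := by gcongr <;> exact hle _
    _ = |C i j| := by ring

lemma lamMax_le_lamMax_add_sum_abs (hn : 0 < n) (A B : Matrix (Fin n) (Fin n) ℝ) :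
    lamMax A ≤ lamMax B + ∑ i, ∑ j, |A i j - B i j| := by
  obtain ⟨v, hv1, hv⟩ := exists_dotProduct_mulVec_eq_lamMax hn A
  have hB := dotProduct_mulVec_le_lamMax B v
  have hAB := dotProduct_mulVec_le_sum_abs hv1 (A - B)
  rw [hv1, mul_one] at hB
  rw [sub_mulVec, dotProduct_sub, hv] at hAB
  simp only [Matrix.sub_apply] at hAB
  linarith

lemma continuous_lamMax : Continuous (lamMax : Matrix (Fin n) (Fin n) ℝ → ℝ) := by
  rcases Nat.eq_zero_or_pos n with rfl | hn
  · exact continuous_of_const fun A B => congrArg lamMax (Subsingleton.elim A B)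
  refine continuous_iff_continuousAt.mpr fun A₀ => ?_
  have hbound : Continuous fun A : Matrix (Fin n) (Fin n) ℝ => ∑ i, ∑ j, |A i j - A₀ i j| := by
    fun_prop
  have h0 : Filter.Tendsto (fun A : Matrix (Fin n) (Fin n) ℝ => ∑ i, ∑ j, |A i j - A₀ i j|)
      (nhds A₀) (nhds 0) := by
    simpa using hbound.tendsto A₀
  refine tendsto_iff_dist_tendsto_zero.mpr (squeeze_zero (fun _ => dist_nonneg) (fun A => ?_) h0)
  rw [Real.dist_eq, abs_sub_le_iff]
  constructor
  · linarith [lamMax_le_lamMax_add_sum_abs hn A A₀]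
  · have := lamMax_le_lamMax_add_sum_abs hn A₀ A
    simp only [abs_sub_comm (A₀ _ _)] at this
    linarith

end LeadingEigenvalue

section RankOneUpdate

variable {n : ℕ}

def rankOneUpdate (A : Matrix (Fin n) (Fin n) ℝ) (c : ℝ) (x : Fin n → ℝ) :
    Matrix (Fin n) (Fin n) ℝ :=
  A + c • vecMulVec x x

lemma rankOneUpdate_mulVec (A : Matrix (Fin n) (Fin n) ℝ) (c : ℝ) (x v : Fin n → ℝ) :
    rankOneUpdate A c x *ᵥ v = A *ᵥ v + (c * (x ⬝ᵥ v)) • x := by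
  ext i
  simp only [rankOneUpdate, mulVec, dotProduct, Matrix.add_apply, Matrix.smul_apply,
    vecMulVec_apply, add_mul, Finset.sum_add_distrib, Pi.add_apply, Pi.smul_apply, smul_eq_mul,
    Finset.mul_sum, Finset.sum_mul]
  congr 1
  exact Finset.sum_congr rfl fun j _ => by ring

lemma Matrix.IsHermitian.rankOneUpdate {A : Matrix (Fin n) (Fin n) ℝ} (hA : A.IsHermitian)
    (c : ℝ) (x : Fin n → ℝ) : (rankOneUpdate A c x).IsHermitian :=
  hA.add <| IsHermitian.smul (by ext i j; simp [vecMulVec_apply, mul_comm]) (k := c) rfl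

lemma rankOneUpdate_mulVec_eq_conj {A S : Matrix (Fin n) (Fin n) ℝ} (hSA : S * A * Sᵀ = A)
    (c : ℝ) (x : Fin n → ℝ) :
    rankOneUpdate A c (S *ᵥ x) = S * rankOneUpdate A c x * Sᵀ := by
  rw [rankOneUpdate, rankOneUpdate, Matrix.mul_add, Matrix.add_mul, hSA, Matrix.mul_smul,
    Matrix.smul_mul, mul_vecMulVec, vecMulVec_mul, vecMul_transpose]

lemma lamMax_rankOneUpdate_mulVec {A S : Matrix (Fin n) (Fin n) ℝ}
    (hS : S ∈ orthogonalGroup (Fin n) ℝ) (hSA : S * A * Sᵀ = A) (c : ℝ) (x : Fin n → ℝ) :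
    lamMax (rankOneUpdate A c (S *ᵥ x)) = lamMax (rankOneUpdate A c x) := by
  rw [rankOneUpdate_mulVec_eq_conj hSA, lamMax_mul_mul_transpose hS]

lemma lamMax_lt_lamMax_rankOneUpdate {A : Matrix (Fin n) (Fin n) ℝ} {c : ℝ} (hc : 0 < c)
    {u x : Fin n → ℝ} (hu1 : u ⬝ᵥ u = 1) (hu : A *ᵥ u = lamMax A • u) (hxu : x ⬝ᵥ u ≠ 0) :
    lamMax A < lamMax (rankOneUpdate A c x) := by
  have h := dotProduct_mulVec_le_lamMax (rankOneUpdate A c x) u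
  rw [rankOneUpdate_mulVec, hu, dotProduct_add, dotProduct_smul, dotProduct_smul, hu1,
    dotProduct_comm u x, smul_eq_mul, smul_eq_mul, mul_one, mul_one] at h
  have : 0 < c * (x ⬝ᵥ u) * (x ⬝ᵥ u) := by
    rw [mul_assoc]; exact mul_pos hc (mul_self_pos.mpr hxu)
  linarith

lemma posDef_smul_one_sub {A : Matrix (Fin n) (Fin n) ℝ} (hA : A.IsHermitian) {t : ℝ}
    (ht : lamMax A < t) : (t • (1 : Matrix (Fin n) (Fin n) ℝ) - A).PosDef := by
  refine .of_dotProduct_mulVec_pos ((isHermitian_one.smul (k := t) rfl).sub hA) fun v hv => ?_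
  have h := hA.dotProduct_mulVec_le v
  have hvv : 0 < v ⬝ᵥ v := by simpa using dotProduct_star_self_pos_iff.mpr hv
  rw [star_trivial, sub_mulVec, smul_mulVec, one_mulVec, dotProduct_sub, dotProduct_smul,
    smul_eq_mul]
  nlinarith

lemma eq_smul_inv_mulVec_of_rankOneUpdate_mulVec_eq {A : Matrix (Fin n) (Fin n) ℝ} {c t : ℝ}
    (ht : IsUnit (t • (1 : Matrix (Fin n) (Fin n) ℝ) - A)) {x v : Fin n → ℝ}
    (hv : rankOneUpdate A c x *ᵥ v = t • v) :
    v = (c * (x ⬝ᵥ v)) • ((t • 1 - A)⁻¹ *ᵥ x) := by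
  have hres : (t • 1 - A) *ᵥ v = (c * (x ⬝ᵥ v)) • x := by
    rw [rankOneUpdate_mulVec] at hv
    rw [sub_mulVec, smul_mulVec, one_mulVec, ← hv, add_sub_cancel_left]
  rw [← mulVec_smul, ← hres, mulVec_mulVec,
    nonsing_inv_mul _ ((isUnit_iff_isUnit_det _).mp ht), one_mulVec]

lemma eq_or_eq_neg_of_rankOneUpdate_mulVec_eq {A : Matrix (Fin n) (Fin n) ℝ} {c t : ℝ}
    (ht : IsUnit (t • (1 : Matrix (Fin n) (Fin n) ℝ) - A)) {x v w : Fin n → ℝ}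
    (hv : rankOneUpdate A c x *ᵥ v = t • v) (hw : rankOneUpdate A c x *ᵥ w = t • w)
    (hv1 : v ⬝ᵥ v = 1) (hw1 : w ⬝ᵥ w = 1) : v = w ∨ v = -w := by
  set g := (t • 1 - A)⁻¹ *ᵥ x
  set α := c * (x ⬝ᵥ v)
  set β := c * (x ⬝ᵥ w)
  have hvg : v = α • g := eq_smul_inv_mulVec_of_rankOneUpdate_mulVec_eq ht hv
  have hwg : w = β • g := eq_smul_inv_mulVec_of_rankOneUpdate_mulVec_eq ht hw
  rw [hvg, smul_dotProduct, dotProduct_smul, smul_eq_mul, smul_eq_mul] at hv1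
  rw [hwg, smul_dotProduct, dotProduct_smul, smul_eq_mul, smul_eq_mul] at hw1
  have hg : g ⬝ᵥ g ≠ 0 := fun h => by simp [h] at hv1
  have hαβ : α * α = β * β := by
    apply mul_right_cancel₀ hg
    linear_combination hv1 - hw1
  rcases mul_self_eq_mul_self_iff.mp hαβ with h | h
  · exact .inl (by rw [hvg, hwg, h])
  · exact .inr (by rw [hvg, hwg, h, neg_smul])

lemma mul_dotProduct_inv_mulVec_eq_one {A : Matrix (Fin n) (Fin n) ℝ} {c t : ℝ}
    (ht : IsUnit (t • (1 : Matrix (Fin n) (Fin n) ℝ) - A)) {x v : Fin n → ℝ}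
    (hv : rankOneUpdate A c x *ᵥ v = t • v) (hv0 : v ≠ 0) :
    c * (x ⬝ᵥ (t • 1 - A)⁻¹ *ᵥ x) = 1 := by
  have hvg := eq_smul_inv_mulVec_of_rankOneUpdate_mulVec_eq ht hv
  have hxv : x ⬝ᵥ v ≠ 0 := fun h => hv0 (by rw [hvg, h, mul_zero, zero_smul])
  have h := congrArg (x ⬝ᵥ ·) hvg
  simp only [dotProduct_smul, smul_eq_mul] at h
  apply mul_left_cancel₀ hxv
  linear_combination -h

end RankOneUpdate

section NullSets

lemma measure_pi_eq_zero_of_forall_slice {m : ℕ} {α : Fin (m + 1) → Type*}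
    [∀ i, MeasurableSpace (α i)] (μ : ∀ i, Measure (α i)) [∀ i, SigmaFinite (μ i)]
    (j : Fin (m + 1)) {W : Set (∀ i, α i)} (hW : MeasurableSet W)
    (h : ∀ r, μ j {x | j.insertNth x r ∈ W} = 0) : Measure.pi μ W = 0 := by
  set e := MeasurableEquiv.piFinSuccAbove α j
  have hWe : W = e ⁻¹' (e.symm ⁻¹' W) := by ext; simp
  rw [hWe, (measurePreserving_piFinSuccAbove μ j).measure_preimage_equiv,
    Measure.prod_apply_symm (e.symm.measurable hW)]
  exact (lintegral_congr h).trans lintegral_zero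

lemma insertNth_eq_add_smul_single {R : Type*} [Semiring R] {m : ℕ} (j : Fin (m + 1)) (s : R)
    (r : Fin m → R) :
    j.insertNth s r = j.insertNth 0 r + s • Pi.single j 1 := by
  ext i
  cases i using j.succAboveCases <;> simp

lemma measure_pi_eq_zero_of_finite_lines {n : ℕ} (ν : Fin n → Measure ℝ)
    [∀ i, SigmaFinite (ν i)] (j : Fin n) [NullSingletonClass (ν j)] {W : Set (Fin n → ℝ)}
    (hW : MeasurableSet W) (h : ∀ x, {s : ℝ | x + s • Pi.single j 1 ∈ W}.Finite) :
    Measure.pi ν W = 0 := by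
  cases n with
  | zero => exact j.elim0
  | succ m =>
    refine measure_pi_eq_zero_of_forall_slice ν j hW fun r => ?_
    have hline : {s | j.insertNth s r ∈ W} = {s | j.insertNth 0 r + s • Pi.single j 1 ∈ W} :=
      Set.ext fun s => iff_of_eq (congrArg (· ∈ W) (insertNth_eq_add_smul_single j s r))
    rw [hline]
    exact (h _).measure_zero _

lemma measure_pi_setOf_dotProduct_eq {n : ℕ} (ν : Fin n → Measure ℝ) [∀ i, SigmaFinite (ν i)]
    [∀ i, NullSingletonClass (ν i)] {w : Fin n → ℝ} (hw : w ≠ 0) (a : ℝ) :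
    Measure.pi ν {x | x ⬝ᵥ w = a} = 0 := by
  obtain ⟨j, hj⟩ := Function.ne_iff.mp hw
  refine measure_pi_eq_zero_of_finite_lines ν j (measurableSet_eq_fun (by fun_prop) (by fun_prop))
    fun x => (Set.finite_singleton ((a - x ⬝ᵥ w) / w j)).subset
      fun s (hs : (x + s • Pi.single j 1) ⬝ᵥ w = a) => ?_
  rw [add_dotProduct, smul_dotProduct, single_one_dotProduct, smul_eq_mul] at hs
  rw [Set.mem_singleton_iff, eq_div_iff hj]
  linarith

lemma finite_setOf_quadratic_eq_zero {R : Type*} [CommRing R] [IsDomain R] {a : R} (ha : a ≠ 0)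
    (b d : R) : {s : R | a * s ^ 2 + b * s + d = 0}.Finite := by
  open Polynomial in
  have hp : C a * X ^ 2 + C b * X + C d ≠ 0 := fun h => ha <| by
    simpa using congrArg (coeff · 2) h
  refine (Polynomial.finite_setOfPred_isRoot hp).subset fun s hs => ?_
  simpa using hs

lemma dotProduct_mulVec_add_smul {ι R : Type*} [Fintype ι] [CommRing R] (Q : Matrix ι ι R)
    (x y : ι → R) (s : R) :
    (x + s • y) ⬝ᵥ Q *ᵥ (x + s • y) =
      (y ⬝ᵥ Q *ᵥ y) * s ^ 2 + (x ⬝ᵥ Q *ᵥ y + y ⬝ᵥ Q *ᵥ x) * s + x ⬝ᵥ Q *ᵥ x := by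
  simp only [mulVec_add, mulVec_smul, add_dotProduct, dotProduct_add, smul_dotProduct,
    dotProduct_smul, smul_eq_mul]
  ring

lemma measure_pi_setOf_dotProduct_mulVec_eq {n : ℕ} (ν : Fin n → Measure ℝ)
    [∀ i, SigmaFinite (ν i)] [∀ i, NullSingletonClass (ν i)] {Q : Matrix (Fin n) (Fin n) ℝ}
    {j : Fin n} (hQ : Q j j ≠ 0) (a : ℝ) :
    Measure.pi ν {x | x ⬝ᵥ Q *ᵥ x = a} = 0 := by
  refine measure_pi_eq_zero_of_finite_lines ν j (measurableSet_eq_fun (by fun_prop) (by fun_prop))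
    fun x => (finite_setOf_quadratic_eq_zero hQ
      (x ⬝ᵥ Q *ᵥ Pi.single j 1 + Pi.single j 1 ⬝ᵥ Q *ᵥ x) (x ⬝ᵥ Q *ᵥ x - a)).subset
      fun s (hs : (x + s • Pi.single j 1) ⬝ᵥ Q *ᵥ (x + s • Pi.single j 1) = a) => ?_
  have hjj : Pi.single j 1 ⬝ᵥ Q *ᵥ Pi.single j 1 = Q j j := by simp
  rw [dotProduct_mulVec_add_smul, hjj] at hs
  show _ = 0
  linarith

lemma measure_pi_setOf_apply_eq_apply {α : Type*} [MeasurableSpace α] (ν : Measure α)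
    [SigmaFinite ν] {F : α → ℝ} (hF : Measurable F) (hlevel : ∀ t, ν {x | F x = t} = 0)
    {k : ℕ} {m m' : Fin k} (hmm' : m ≠ m') :
    Measure.pi (fun _ : Fin k => ν) {z | F (z m) = F (z m')} = 0 := by
  obtain ⟨k, rfl⟩ : ∃ k', k = k' + 1 := ⟨k - 1, by have := m.pos; omega⟩
  obtain ⟨i, rfl⟩ := Fin.exists_succAbove_eq hmm'.symm
  refine measure_pi_eq_zero_of_forall_slice _ m
    (measurableSet_eq_fun (by fun_prop) (by fun_prop)) fun r => ?_
  simpa only [Set.mem_ofPred_eq, Fin.insertNth_apply_same, Fin.insertNth_apply_succAbove]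
    using hlevel (F (r i))

end NullSets

section GaussianMeasure

variable {n : ℕ}

lemma stdGaussian_eq_map_ofLp :
    stdGaussian n = (ProbabilityTheory.stdGaussian (EuclideanSpace ℝ (Fin n))).map WithLp.ofLp := by
  rw [← map_pi_eq_stdGaussian, Measure.map_map (by fun_prop) (by fun_prop)]
  exact Measure.map_id.symm

lemma measurePreserving_mulVec_stdGaussian {S : Matrix (Fin n) (Fin n) ℝ}
    (hS : S ∈ orthogonalGroup (Fin n) ℝ) :
    MeasurePreserving (S *ᵥ ·) (stdGaussian n) (stdGaussian n) := by
  let f : EuclideanSpace ℝ (Fin n) ≃ₗᵢ[ℝ] EuclideanSpace ℝ (Fin n) :=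
    ((toEuclideanLin S).isometryOfInner fun x y => by
      simp only [EuclideanSpace.inner_eq_star_dotProduct, star_trivial, toLpLin_apply]
      exact mulVec_dotProduct_mulVec hS _ _).toLinearIsometryEquiv rfl
  refine ⟨by fun_prop, ?_⟩
  rw [stdGaussian_eq_map_ofLp, Measure.map_map (by fun_prop) (by fun_prop)]
  calc Measure.map ((S *ᵥ ·) ∘ WithLp.ofLp) (ProbabilityTheory.stdGaussian _)
      = ((ProbabilityTheory.stdGaussian _).map f).map WithLp.ofLp := by
        rw [Measure.map_map (by fun_prop) f.continuous.measurable]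
        rfl
    _ = _ := by rw [stdGaussian_map]

end GaussianMeasure

instance : NullSingletonClass (gaussianReal 0 1) := nullSingletonClass_gaussianReal one_ne_zero

section GaussianRankOneUpdate

variable {n : ℕ} {X : Matrix (Fin n) (Fin n) ℝ} {c : ℝ}

lemma measurable_lamMax_rankOneUpdate (X : Matrix (Fin n) (Fin n) ℝ) (c : ℝ) :
    Measurable fun x => lamMax (rankOneUpdate X c x) :=
  (continuous_lamMax.comp (by unfold rankOneUpdate; fun_prop)).measurable

lemma ae_lamMax_lt_lamMax_rankOneUpdate (hn : 0 < n) (hX : X.IsHermitian) (hc : 0 < c) :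
    ∀ᵐ x ∂stdGaussian n, lamMax X < lamMax (rankOneUpdate X c x) := by
  obtain ⟨u, hu1, hu⟩ := hX.exists_mulVec_eq_lamMax_smul hn
  have hu0 : u ≠ 0 := by rintro rfl; simp at hu1
  refine ae_iff.mpr (measure_mono_null (fun x hx => ?_) (measure_pi_setOf_dotProduct_eq _ hu0 0))
  by_contra hxu
  exact hx (lamMax_lt_lamMax_rankOneUpdate hc hu1 hu hxu)

lemma stdGaussian_setOf_lamMax_rankOneUpdate_eq (hn : 0 < n) (hX : X.IsHermitian) (hc : 0 < c)
    (t : ℝ) : stdGaussian n {x | lamMax (rankOneUpdate X c x) = t} = 0 := by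
  by_cases ht : lamMax X < t
  · have hQ := posDef_smul_one_sub hX ht
    refine measure_mono_null (fun x (hx : lamMax _ = t) => ?_)
      (measure_pi_setOf_dotProduct_mulVec_eq _ (hQ.inv.diag_pos (i := ⟨0, hn⟩)).ne' c⁻¹)
    obtain ⟨v, hv1, hv⟩ := (hX.rankOneUpdate c x).exists_mulVec_eq_lamMax_smul hn
    have hv0 : v ≠ 0 := by rintro rfl; simp at hv1
    have h := mul_dotProduct_inv_mulVec_eq_one hQ.isUnit (hx ▸ hv) hv0
    show _ = c⁻¹
    exact eq_inv_of_mul_eq_one_right h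
  · exact measure_mono_null (fun x (hx : lamMax _ = t) => fun hlt => ht (hx ▸ hlt))
      (ae_iff.mp (ae_lamMax_lt_lamMax_rankOneUpdate hn hX hc))

end GaussianRankOneUpdate

section LeadingEigenvectorAtArgmax

variable {n k : ℕ} {X : Matrix (Fin n) (Fin n) ℝ} {c : ℝ}

def IsLeadingEigenvectorAtArgmax (X : Matrix (Fin n) (Fin n) ℝ) (c : ℝ)
    (z : Fin k → Fin n → ℝ) (v : Fin n → ℝ) : Prop :=
  ∃ i₀, (∀ j, lamMax (rankOneUpdate X c (z j)) ≤ lamMax (rankOneUpdate X c (z i₀))) ∧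
    rankOneUpdate X c (z i₀) *ᵥ v = lamMax (rankOneUpdate X c (z i₀)) • v ∧ ∑ i, v i ^ 2 = 1

lemma IsLeadingEigenvectorAtArgmax.eq_or_eq_neg_mulVec (hX : X.IsHermitian)
    {S : Matrix (Fin n) (Fin n) ℝ} (hS : S ∈ orthogonalGroup (Fin n) ℝ) (hSX : S * X * Sᵀ = X)
    {z : Fin k → Fin n → ℝ} {v w : Fin n → ℝ} (hv : IsLeadingEigenvectorAtArgmax X c z v)
    (hw : IsLeadingEigenvectorAtArgmax X c (fun m => S *ᵥ z m) w)
    (hgap : ∀ m, lamMax X < lamMax (rankOneUpdate X c (z m)))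
    (hinj : ∀ m m', lamMax (rankOneUpdate X c (z m)) = lamMax (rankOneUpdate X c (z m')) → m = m') :
    w = S *ᵥ v ∨ w = -(S *ᵥ v) := by
  obtain ⟨i₀, hmax, hv, hv1⟩ := hv
  obtain ⟨i₁, hmax', hw, hw1⟩ := hw
  simp only [lamMax_rankOneUpdate_mulVec hS hSX] at hmax' hw
  obtain rfl : i₁ = i₀ := hinj _ _ (le_antisymm (hmax i₁) (hmax' i₀))
  rw [rankOneUpdate_mulVec_eq_conj hSX] at hw
  have hw' : rankOneUpdate X c (z i₁) *ᵥ (Sᵀ *ᵥ w) =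
      lamMax (rankOneUpdate X c (z i₁)) • (Sᵀ *ᵥ w) := by
    rw [← mulVec_smul, ← hw, mulVec_mulVec, mulVec_mulVec, Matrix.mul_assoc,
      transpose_mul_mul_cancel hS]
  have hsq : ∀ u : Fin n → ℝ, ∑ i, u i ^ 2 = u ⬝ᵥ u := fun u => by simp [dotProduct, sq]
  have hw1' : (Sᵀ *ᵥ w) ⬝ᵥ (Sᵀ *ᵥ w) = 1 := by
    rw [mulVec_dotProduct_mulVec (transpose_mem_orthogonalGroup hS), ← hsq, hw1]
  rcases eq_or_eq_neg_of_rankOneUpdate_mulVec_eq (posDef_smul_one_sub hX (hgap i₁)).isUnit hw' hv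
    hw1' (hsq v ▸ hv1) with h | h
  · exact .inl (by rw [← h, mulVec_transpose_mulVec_cancel hS])
  · exact .inr (by rw [← mulVec_neg, ← h, mulVec_transpose_mulVec_cancel hS])

lemma ae_apply_mulVec_eq_or_eq_neg (hn : 0 < n) (hX : X.IsHermitian) (hc : 0 < c)
    {φ : (Fin k → Fin n → ℝ) → Fin n → ℝ}
    (hφ : ∀ᵐ z ∂(Measure.pi fun _ : Fin k => stdGaussian n),
      IsLeadingEigenvectorAtArgmax X c z (φ z))
    {S : Matrix (Fin n) (Fin n) ℝ} (hS : S ∈ orthogonalGroup (Fin n) ℝ) (hSX : S * X * Sᵀ = X) :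
    ∀ᵐ z ∂(Measure.pi fun _ : Fin k => stdGaussian n),
      φ (fun m => S *ᵥ z m) = S *ᵥ φ z ∨ φ (fun m => S *ᵥ z m) = -(S *ᵥ φ z) := by
  have hT : MeasurePreserving (fun (z : Fin k → Fin n → ℝ) m => S *ᵥ z m)
      (Measure.pi fun _ => stdGaussian n) (Measure.pi fun _ => stdGaussian n) :=
    measurePreserving_pi _ _ fun _ => measurePreserving_mulVec_stdGaussian hS
  have hgap : ∀ᵐ z ∂(Measure.pi fun _ : Fin k => stdGaussian n),
      ∀ m, lamMax X < lamMax (rankOneUpdate X c (z m)) :=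
    ae_all_iff.mpr fun m =>
      (measurePreserving_eval (fun _ : Fin k => stdGaussian n) m).quasiMeasurePreserving.ae
      (ae_lamMax_lt_lamMax_rankOneUpdate hn hX hc)
  have hinj : ∀ᵐ z ∂(Measure.pi fun _ : Fin k => stdGaussian n), ∀ m m',
      lamMax (rankOneUpdate X c (z m)) = lamMax (rankOneUpdate X c (z m')) → m = m' := by
    refine ae_all_iff.mpr fun m => ae_all_iff.mpr fun m' => ?_
    rcases eq_or_ne m m' with rfl | hmm'
    · exact ae_of_all _ fun _ _ => rfl
    · refine ae_iff.mpr (measure_mono_null (fun z hz => ?_)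
        (measure_pi_setOf_apply_eq_apply _ (measurable_lamMax_rankOneUpdate X c)
          (stdGaussian_setOf_lamMax_rankOneUpdate_eq hn hX hc) hmm'))
      exact (Classical.not_imp.mp hz).1
  filter_upwards [hφ, hT.quasiMeasurePreserving.ae hφ, hgap, hinj] with z hv hw hz hz'
  exact hv.eq_or_eq_neg_mulVec hX hS hSX hw hz hz'

end LeadingEigenvectorAtArgmax

section SecondMoment

variable {α ι κ : Type*} [MeasurableSpace α] {μ : Measure α}

noncomputable def secondMoment (μ : Measure α) (φ : α → ι → ℝ) : Matrix ι ι ℝ :=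
  Matrix.of fun i j => ∫ z, φ z i * φ z j ∂μ

lemma integrable_mul_apply_of_sum_sq_eq_one [Fintype ι] [IsFiniteMeasure μ] {φ : α → ι → ℝ}
    (hφm : Measurable φ) (hφ : ∀ᵐ z ∂μ, ∑ i, φ z i ^ 2 = 1) (i j : ι) :
    Integrable (fun z => φ z i * φ z j) μ := by
  refine (integrable_const 1).mono' (by fun_prop) (hφ.mono fun z hz => ?_)
  have hle : ∀ i, |φ z i| ≤ 1 := fun i => by
    rw [← sq_le_one_iff_abs_le_one, ← hz]
    exact Finset.single_le_sum (fun j _ => sq_nonneg (φ z j)) (Finset.mem_univ i)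
  rw [Real.norm_eq_abs, abs_mul]
  exact mul_le_one₀ (hle i) (abs_nonneg _) (hle j)

lemma secondMoment_mulVec [Fintype ι] [Fintype κ] {φ : α → ι → ℝ}
    (hint : ∀ i j, Integrable (fun z => φ z i * φ z j) μ) (S : Matrix κ ι ℝ) :
    secondMoment μ (fun z => S *ᵥ φ z) = S * secondMoment μ φ * Sᵀ := by
  ext a b
  have hexp : ∀ z, (S *ᵥ φ z) a * (S *ᵥ φ z) b = ∑ i, ∑ j, S a i * S b j * (φ z i * φ z j) :=
    fun z => by
      simp only [mulVec, dotProduct, Finset.sum_mul_sum]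
      exact Finset.sum_congr rfl fun i _ => Finset.sum_congr rfl fun j _ => by ring
  simp only [secondMoment, of_apply, hexp, mul_apply, transpose_apply, Finset.sum_mul]
  rw [integral_finsetSum _ fun i _ => integrable_finsetSum _ fun j _ => (hint i j).const_mul _,
    Finset.sum_comm (s := Finset.univ) (t := Finset.univ) (f := fun j i => S a i * _ * S b j)]
  refine Finset.sum_congr rfl fun i _ => ?_
  rw [integral_finsetSum _ fun j _ => (hint i j).const_mul _]
  exact Finset.sum_congr rfl fun j _ => by rw [integral_const_mul]; ring

lemma secondMoment_congr_of_ae_eq_or_eq_neg {φ ψ : α → ι → ℝ}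
    (h : ∀ᵐ z ∂μ, φ z = ψ z ∨ φ z = -ψ z) : secondMoment μ φ = secondMoment μ ψ := by
  ext i j
  refine integral_congr_ae (h.mono fun z hz => ?_)
  rcases hz with hz | hz <;> simp [hz]

lemma MeasureTheory.MeasurePreserving.secondMoment_comp {β : Type*} [MeasurableSpace β]
    {ν : Measure β} {T : α → β} (hT : MeasurePreserving T μ ν) {φ : β → ι → ℝ}
    (hφm : Measurable φ) : secondMoment μ (φ ∘ T) = secondMoment ν φ := by
  ext i j
  simp only [secondMoment, of_apply, Function.comp_apply]
  rw [← hT.map_eq, integral_map hT.measurable.aemeasurable (by fun_prop)]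

lemma mul_secondMoment_mul_transpose_eq [Fintype ι] {T : α → α} (hT : MeasurePreserving T μ μ)
    {φ : α → ι → ℝ} (hφm : Measurable φ) (hint : ∀ i j, Integrable (fun z => φ z i * φ z j) μ)
    {S : Matrix ι ι ℝ} (h : ∀ᵐ z ∂μ, φ (T z) = S *ᵥ φ z ∨ φ (T z) = -(S *ᵥ φ z)) :
    S * secondMoment μ φ * Sᵀ = secondMoment μ φ :=
  calc S * secondMoment μ φ * Sᵀ = secondMoment μ (fun z => S *ᵥ φ z) :=
        (secondMoment_mulVec hint S).symm
    _ = secondMoment μ (φ ∘ T) := (secondMoment_congr_of_ae_eq_or_eq_neg h).symm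
    _ = secondMoment μ φ := hT.secondMoment_comp hφm

end SecondMoment

section CoordinateReflection

variable {ι : Type*} [Fintype ι] [DecidableEq ι]

def coordReflection (a : ι) : Matrix ι ι ℝ :=
  diagonal (Function.update 1 a (-1))

lemma coordReflection_mul_self (a : ι) : coordReflection a * coordReflection a = 1 := by
  rw [coordReflection, diagonal_mul_diagonal, ← diagonal_one]
  congr 1
  ext i
  rcases eq_or_ne i a with rfl | h <;> simp [*]

lemma coordReflection_mem_orthogonalGroup (a : ι) :
    coordReflection a ∈ orthogonalGroup ι ℝ := by
  rw [mem_orthogonalGroup_iff, coordReflection, diagonal_transpose, ← coordReflection,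
    coordReflection_mul_self]

lemma coordReflection_mul_diagonal_mul (a : ι) (d : ι → ℝ) (A : Matrix ι ι ℝ) :
    coordReflection a * (diagonal d * (coordReflection a * A)) = diagonal d * A := by
  rw [coordReflection, ← Matrix.mul_assoc, ← Matrix.mul_assoc, diagonal_mul_diagonal,
    diagonal_mul_diagonal]
  congr 2
  ext i
  rcases eq_or_ne i a with rfl | h <;> simp [*]

lemma isDiag_of_forall_coordReflection_mul_mul_eq {G : Matrix ι ι ℝ}
    (h : ∀ a, coordReflection a * G * coordReflection a = G) : G.IsDiag := by
  intro a b hab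
  have := congrFun (congrFun (h a) a) b
  simp only [coordReflection, mul_diagonal, diagonal_mul, Function.update_self, neg_mul, one_mul,
    Function.update_of_ne hab.symm, Pi.one_apply, mul_one] at this
  linarith

lemma exists_eq_transpose_mul_diagonal_mul {O : Matrix ι ι ℝ} (hO : O ∈ orthogonalGroup ι ℝ)
    (d : ι → ℝ) {E : Matrix ι ι ℝ}
    (hE : ∀ S ∈ orthogonalGroup ι ℝ, S * (Oᵀ * diagonal d * O) * Sᵀ = Oᵀ * diagonal d * O →
      S * E * Sᵀ = E) :
    ∃ e, E = Oᵀ * diagonal e * O := by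
  have hOOt := (mem_orthogonalGroup_iff _ _).mp hO
  have hOtO := (mem_orthogonalGroup_iff' _ _).mp hO
  have hG : ∀ a, coordReflection a * (O * E * Oᵀ) * coordReflection a = O * E * Oᵀ := by
    intro a
    set S := Oᵀ * coordReflection a * O
    have hS : S ∈ orthogonalGroup ι ℝ :=
      mul_mem (mul_mem (transpose_mem_orthogonalGroup hO)
        (coordReflection_mem_orthogonalGroup a)) hO
    have hRt : (coordReflection a)ᵀ = coordReflection a := diagonal_transpose _
    have hSX : S * (Oᵀ * diagonal d * O) * Sᵀ = Oᵀ * diagonal d * O := by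
      simp only [S, transpose_mul, transpose_transpose, hRt, Matrix.mul_assoc,
        mul_transpose_mul_cancel hO, coordReflection_mul_diagonal_mul]
    calc coordReflection a * (O * E * Oᵀ) * coordReflection a = O * (S * E * Sᵀ) * Oᵀ := by
          simp only [S, transpose_mul, transpose_transpose, hRt, Matrix.mul_assoc,
            mul_transpose_mul_cancel hO, hOOt, Matrix.mul_one]
      _ = O * E * Oᵀ := by rw [hE S hS hSX]
  refine ⟨(O * E * Oᵀ).diag, ?_⟩
  rw [(isDiag_iff_diagonal_diag _).mp (isDiag_of_forall_coordReflection_mul_mul_eq hG)]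
  simp only [Matrix.mul_assoc, transpose_mul_mul_cancel hO, hOtO, Matrix.mul_one]

end CoordinateReflection

theorem stmt19_general {n k : ℕ} (hn : 0 < n)
    (X : Matrix (Fin n) (Fin n) ℝ) (hX : X.IsHermitian) (ε : ℝ) (hε : 0 < ε)
    (φ : (Fin k → Fin n → ℝ) → Fin n → ℝ) (hφm : Measurable φ)
    (hφ : ∀ᵐ z ∂(Measure.pi fun _ : Fin k => stdGaussian n), ∃ i₀ : Fin k,
      (∀ j, lamMax (X + (ε / n) • Matrix.vecMulVec (z j) (z j)) ≤
        lamMax (X + (ε / n) • Matrix.vecMulVec (z i₀) (z i₀))) ∧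
      (X + (ε / n) • Matrix.vecMulVec (z i₀) (z i₀)).mulVec (φ z) =
        lamMax (X + (ε / n) • Matrix.vecMulVec (z i₀) (z i₀)) • φ z ∧
      ∑ i, φ z i ^ 2 = 1) :
    (∀ (O : Matrix (Fin n) (Fin n) ℝ) (d : Fin n → ℝ),
      O * Oᵀ = 1 → Oᵀ * O = 1 → X = Oᵀ * Matrix.diagonal d * O →
      ∃ e : Fin n → ℝ,
        (Matrix.of fun i j =>
            ∫ z, φ z i * φ z j ∂(Measure.pi fun _ : Fin k => stdGaussian n)) =
          Oᵀ * Matrix.diagonal e * O) ∧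
    ((∃ dX : Fin n → ℝ, X = Matrix.diagonal dX) → ∀ i j : Fin n, i ≠ j →
      (∫ z, φ z i * φ z j ∂(Measure.pi fun _ : Fin k => stdGaussian n)) = 0) := by
  have hc : 0 < ε / n := by positivity
  have hφ' : ∀ᵐ z ∂(Measure.pi fun _ : Fin k => stdGaussian n),
      IsLeadingEigenvectorAtArgmax X (ε / n) z (φ z) := hφ
  have hint := integrable_mul_apply_of_sum_sq_eq_one hφm (hφ.mono fun _ ⟨_, _, _, h⟩ => h)
  have hinv : ∀ S ∈ orthogonalGroup (Fin n) ℝ, S * X * Sᵀ = X →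
      S * secondMoment _ φ * Sᵀ = secondMoment _ φ := fun S hS hSX =>
    mul_secondMoment_mul_transpose_eq
      (measurePreserving_pi _ _ fun _ => measurePreserving_mulVec_stdGaussian hS) hφm hint
      (ae_apply_mulVec_eq_or_eq_neg hn hX hc hφ' hS hSX)
  have hdiag : ∀ (O : Matrix (Fin n) (Fin n) ℝ) (d : Fin n → ℝ), O * Oᵀ = 1 →
      X = Oᵀ * diagonal d * O → ∃ e, secondMoment _ φ = Oᵀ * diagonal e * O :=
    fun O d hO hXd => exists_eq_transpose_mul_diagonal_mul ((mem_orthogonalGroup_iff _ _).mpr hO) d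
      (hXd ▸ hinv)
  refine ⟨fun O d hO _ hXd => hdiag O d hO hXd, ?_⟩
  rintro ⟨dX, hdX⟩ i j hij
  obtain ⟨e, he⟩ := hdiag 1 dX (by simp) (by simpa using hdX)
  simpa [secondMoment, one_apply_ne hij] using congrFun (congrFun he i) j

theorem stmt19 {n k : ℕ} (hn : 0 < n) (hk : 1 ≤ k)
    (X : Matrix (Fin n) (Fin n) ℝ) (hX : X.IsHermitian) (ε : ℝ) (hε : 0 < ε)
    (φ : (Fin k → Fin n → ℝ) → Fin n → ℝ) (hφm : Measurable φ)
    (hφ : ∀ᵐ z ∂(Measure.pi fun _ : Fin k => stdGaussian n), ∃ i₀ : Fin k,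
      (∀ j, lamMax (X + (ε / n) • Matrix.vecMulVec (z j) (z j)) ≤
        lamMax (X + (ε / n) • Matrix.vecMulVec (z i₀) (z i₀))) ∧
      (X + (ε / n) • Matrix.vecMulVec (z i₀) (z i₀)).mulVec (φ z) =
        lamMax (X + (ε / n) • Matrix.vecMulVec (z i₀) (z i₀)) • φ z ∧
      ∑ i, φ z i ^ 2 = 1) :
    (∀ (O : Matrix (Fin n) (Fin n) ℝ) (d : Fin n → ℝ),
      O * Oᵀ = 1 → Oᵀ * O = 1 → X = Oᵀ * Matrix.diagonal d * O →
      ∃ e : Fin n → ℝ,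
        (Matrix.of fun i j =>
            ∫ z, φ z i * φ z j ∂(Measure.pi fun _ : Fin k => stdGaussian n)) =
          Oᵀ * Matrix.diagonal e * O) ∧
    ((∃ dX : Fin n → ℝ, X = Matrix.diagonal dX) → ∀ i j : Fin n, i ≠ j →
      (∫ z, φ z i * φ z j ∂(Measure.pi fun _ : Fin k => stdGaussian n)) = 0) :=
  stmt19_general hn X hX ε hε φ hφm hφ
end
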